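/- The functional equation $F(x,y,q) = F(xq,y,q) + xq\, F(xq^2,y,q)$ together with the initial conditions $F(x,y,0)=1$, $F(x,0,q) = \sum_{\ell \ge 0} q^{\ell^2} x^{\ell}/(q;q)_\ell$, and $F(0,y,q) = \sum_{i \ge 0} q^{2i^2} y^i/(q^2;q^2)_i$ has a unique solution $F$ in the ring of formal power series $\mathbb{Z}[[x,y,q]]$. -/

import Mathlib

noncomputable instance : TopologicalSpace (MvPowerSeries (Fin 3) ℤ) := Pi.topologicalSpace

open MvPowerSeries

/-- The exponent triple `(a,b,c)` as a finitely supported function on `Fin 3`. -/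
noncomputable def e3 (a b c : ℕ) : Fin 3 →₀ ℕ := Finsupp.equivFunOnFinite.symm ![a, b, c]

/-- Substitution `x ↦ x·q^m` in `F(x,y,q)`, where `x` is variable `0` and `q` is variable `2`:
the coefficient of `x^a y^b q^c` in the result is the coefficient of `x^a y^b q^{c-ma}`
of `F` (and `0` if `c < ma`). -/
noncomputable def substXq (m : ℕ) (F : MvPowerSeries (Fin 3) ℤ) : MvPowerSeries (Fin 3) ℤ :=
  fun d => if m * d 0 ≤ d 2 then F (e3 (d 0) (d 1) (d 2 - m * d 0)) else 0

/-- Setting the variable `i` to `0` in `F`: only the terms not involving variable `i` survive. -/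
noncomputable def atZero (i : Fin 3) (F : MvPowerSeries (Fin 3) ℤ) : MvPowerSeries (Fin 3) ℤ :=
  fun d => if d i = 0 then F d else 0

/-- `(q^a; q^b)_n` where `q` is the third variable. -/
noncomputable def poch (a b n : ℕ) : MvPowerSeries (Fin 3) ℤ :=
  ∏ t ∈ Finset.range n, (1 - (X 2 : MvPowerSeries (Fin 3) ℤ) ^ (a + b * t))

/-! ### Auxiliary lemmas -/

@[simp] lemma e3_apply0 (a b c : ℕ) : e3 a b c 0 = a := rfl
@[simp] lemma e3_apply1 (a b c : ℕ) : e3 a b c 1 = b := rfl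
@[simp] lemma e3_apply2 (a b c : ℕ) : e3 a b c 2 = c := rfl

lemma e3_eta (d : Fin 3 →₀ ℕ) : e3 (d 0) (d 1) (d 2) = d := by
  ext i; fin_cases i <;> rfl

lemma e3_eq_zero_iff (a b c : ℕ) : e3 a b c = 0 ↔ a = 0 ∧ b = 0 ∧ c = 0 := by
  constructor
  · intro h
    have h0 := DFunLike.congr_fun h 0
    have h1 := DFunLike.congr_fun h 1
    have h2 := DFunLike.congr_fun h 2
    simp at h0 h1 h2
    exact ⟨h0, h1, h2⟩
  · rintro ⟨rfl, rfl, rfl⟩; ext i; fin_cases i <;> rfl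

instance : T2Space (MvPowerSeries (Fin 3) ℤ) :=
  inferInstanceAs (T2Space ((Fin 3 →₀ ℕ) → ℤ))

lemma tsum_apply_single (f : ℕ → MvPowerSeries (Fin 3) ℤ) (l0 : (Fin 3 →₀ ℕ) → ℕ)
    (h : ∀ d l, l ≠ l0 d → f l d = 0) : (∑' l, f l) = fun d => f (l0 d) d := by
  have hs : HasSum f (fun d => f (l0 d) d) :=
    (Pi.hasSum (f := f)).mpr fun d => hasSum_single (l0 d) (fun l hl => h d l hl)
  exact hs.tsum_eq

lemma coeff_Xpow_mul (j : Fin 3) (n : ℕ) (G : MvPowerSeries (Fin 3) ℤ) (d : Fin 3 →₀ ℕ) :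
    coeff d ((X j : MvPowerSeries (Fin 3) ℤ) ^ n * G) =
      if n ≤ d j then coeff (d - Finsupp.single j n) G else 0 := by
  have := MvPowerSeries.coeff_monomial_mul (R := ℤ) (m := d) (n := Finsupp.single j n) (φ := G) 1
  rw [← X_pow_eq] at this
  rw [this]
  simp [Finsupp.single_le_iff]

lemma sub_single2 (d : Fin 3 →₀ ℕ) (n : ℕ) : d - Finsupp.single 2 n = e3 (d 0) (d 1) (d 2 - n) := by
  ext i; fin_cases i <;> simp [Finsupp.tsub_apply, Finsupp.single_apply]
lemma sub_single0 (d : Fin 3 →₀ ℕ) (n : ℕ) : d - Finsupp.single 0 n = e3 (d 0 - n) (d 1) (d 2) := by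
  ext i; fin_cases i <;> simp [Finsupp.tsub_apply, Finsupp.single_apply]
lemma sub_single1 (d : Fin 3 →₀ ℕ) (n : ℕ) : d - Finsupp.single 1 n = e3 (d 0) (d 1 - n) (d 2) := by
  ext i; fin_cases i <;> simp [Finsupp.tsub_apply, Finsupp.single_apply]

/-- Support predicate: a series only involving the variable `q` (index 2). -/
def Qsupp (h : MvPowerSeries (Fin 3) ℤ) : Prop := ∀ d : Fin 3 →₀ ℕ, h d ≠ 0 → d 0 = 0 ∧ d 1 = 0

lemma Qsupp.one : Qsupp 1 := by
  classical
  intro d hd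
  by_contra h
  have hd' : coeff d (1 : MvPowerSeries (Fin 3) ℤ) ≠ 0 := hd
  have hdne : d ≠ 0 := by rintro rfl; exact h ⟨rfl, rfl⟩
  rw [MvPowerSeries.coeff_one] at hd'
  simp [hdne] at hd' 

lemma Qsupp.mul {A B : MvPowerSeries (Fin 3) ℤ} (hA : Qsupp A) (hB : Qsupp B) : Qsupp (A * B) := by
  classical
  intro d hd
  rw [show (A * B) d = coeff d (A * B) from rfl, MvPowerSeries.coeff_mul] at hd
  obtain ⟨p, hp, hne⟩ := Finset.exists_ne_zero_of_sum_ne_zero hd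
  rw [Finset.HasAntidiagonal.mem_antidiagonal] at hp
  have h1 := hA p.1 (left_ne_zero_of_mul hne)
  have h2 := hB p.2 (right_ne_zero_of_mul hne)
  constructor
  · have := congrFun (congrArg (fun f : Fin 3 →₀ ℕ => (f : Fin 3 → ℕ)) hp) 0
    simp only [Finsupp.coe_add, Pi.add_apply] at this
    omega
  · have := congrFun (congrArg (fun f : Fin 3 →₀ ℕ => (f : Fin 3 → ℕ)) hp) 1
    simp only [Finsupp.coe_add, Pi.add_apply] at this
    omega

lemma Qsupp.sub {A B : MvPowerSeries (Fin 3) ℤ} (hA : Qsupp A) (hB : Qsupp B) : Qsupp (A - B) := by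
  intro d hd
  by_cases h1 : A d = 0
  · exact hB d (by simpa [show (A - B) d = A d - B d from rfl, h1] using hd)
  · exact hA d h1

lemma Qsupp.X2pow (n : ℕ) : Qsupp ((X 2 : MvPowerSeries (Fin 3) ℤ) ^ n) := by
  classical
  intro d hd
  have hd' : coeff d ((X 2 : MvPowerSeries (Fin 3) ℤ) ^ n) ≠ 0 := hd
  rw [MvPowerSeries.coeff_X_pow] at hd' 
  have : d = Finsupp.single 2 n := by by_contra h; exact hd' (by simp [h])
  subst this
  simp [Finsupp.single_apply]

lemma Qsupp.poch (a b n : ℕ) : Qsupp (poch a b n) := by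
  unfold _root_.poch
  induction n with
  | zero => simpa using Qsupp.one
  | succ n ih =>
    rw [Finset.prod_range_succ]
    exact ih.mul (Qsupp.one.sub (Qsupp.X2pow _))

lemma isUnit_poch (a b n : ℕ) (ha : 1 ≤ a) : IsUnit (poch a b n) := by
  rw [MvPowerSeries.isUnit_iff_constantCoeff]
  unfold poch
  rw [map_prod]
  have : ∀ t ∈ Finset.range n,
      constantCoeff (1 - (X 2 : MvPowerSeries (Fin 3) ℤ) ^ (a + b * t)) = 1 := by
    intro t _
    rw [map_sub, map_one, map_pow, constantCoeff_X, zero_pow (by omega), sub_zero]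
  rw [Finset.prod_congr rfl this]
  simp

lemma atZero_eq_self {i : Fin 3} {h : MvPowerSeries (Fin 3) ℤ}
    (H : ∀ d : Fin 3 →₀ ℕ, d i ≠ 0 → h d = 0) : atZero i h = h := by
  funext d
  unfold atZero
  by_cases hd : d i = 0
  · simp [hd]
  · simp [hd, H d hd]

lemma atZero_mul (i : Fin 3) (A B : MvPowerSeries (Fin 3) ℤ) :
    atZero i (A * B) = atZero i A * atZero i B := by
  classical
  funext d
  by_cases hd : d i = 0
  · have : coeff d (atZero i A * atZero i B) = coeff d (A * B) := by
      rw [MvPowerSeries.coeff_mul, MvPowerSeries.coeff_mul]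
      apply Finset.sum_congr rfl
      intro p hp
      rw [Finset.HasAntidiagonal.mem_antidiagonal] at hp
      have hadd : p.1 i + p.2 i = d i := by
        have := DFunLike.congr_fun hp i
        simpa using this
      have h1 : p.1 i = 0 := by omega
      have h2 : p.2 i = 0 := by omega
      show (atZero i A) p.1 * (atZero i B) p.2 = A p.1 * B p.2
      unfold atZero
      simp [h1, h2]
    calc atZero i (A * B) d = (A * B) d := by unfold atZero; simp [hd]
    _ = (atZero i A * atZero i B) d := this.symm
  · have : coeff d (atZero i A * atZero i B) = 0 := by
      rw [MvPowerSeries.coeff_mul]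
      apply Finset.sum_eq_zero
      intro p hp
      rw [Finset.HasAntidiagonal.mem_antidiagonal] at hp
      have hadd : p.1 i + p.2 i = d i := by
        have := DFunLike.congr_fun hp i
        simpa using this
      show (atZero i A) p.1 * (atZero i B) p.2 = 0
      unfold atZero
      by_cases h1 : p.1 i = 0
      · have h2 : p.2 i ≠ 0 := by omega
        simp [h2]
      · simp [h1]
    calc atZero i (A * B) d = 0 := by unfold atZero; simp [hd]
    _ = (atZero i A * atZero i B) d := this.symm

lemma atZero_of_Qsupp {h : MvPowerSeries (Fin 3) ℤ} (H : Qsupp h) (i : Fin 3) (hi : i ≠ 2) :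
    atZero i h = h := by
  apply atZero_eq_self
  intro d hd
  by_contra hne
  obtain ⟨h0, h1⟩ := H d hne
  fin_cases i
  · exact hd h0
  · exact hd h1
  · exact hi rfl

lemma Qsupp_inverse_poch (a b n : ℕ) (ha : 1 ≤ a) : Qsupp (Ring.inverse (poch a b n)) := by
  set u := poch a b n with hu
  set v := Ring.inverse u with hv
  have hunit := isUnit_poch a b n ha
  have huv : u * v = 1 := Ring.mul_inverse_cancel u hunit
  have hq := Qsupp.poch a b n
  set v' := atZero 0 (atZero 1 v) with hv'
  have key : u * v' = 1 := by
    have h1 : atZero 1 (u * v) = atZero 1 u * atZero 1 v := atZero_mul _ _ _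
    have h2 : atZero 0 (atZero 1 u * atZero 1 v)
        = atZero 0 (atZero 1 u) * atZero 0 (atZero 1 v) := atZero_mul _ _ _
    have hu1 : atZero 1 u = u := atZero_of_Qsupp hq 1 (by decide)
    have hu0 : atZero 0 u = u := atZero_of_Qsupp hq 0 (by decide)
    have hone : atZero 0 (atZero 1 (1 : MvPowerSeries (Fin 3) ℤ)) = 1 := by
      rw [atZero_of_Qsupp Qsupp.one 1 (by decide), atZero_of_Qsupp Qsupp.one 0 (by decide)]
    calc u * v' = atZero 0 (atZero 1 u) * atZero 0 (atZero 1 v) := by rw [hu1, hu0]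
    _ = atZero 0 (atZero 1 (u * v)) := by rw [h1, h2, hu1]
    _ = 1 := by rw [huv, hone]
  have : v' = v := hunit.mul_left_cancel (by rw [key, huv] : u * v' = u * v)
  intro d hd
  rw [← this] at hd
  rw [hv'] at hd
  unfold atZero at hd
  by_cases h0 : d 0 = 0
  · by_cases h1 : d 1 = 0
    · exact ⟨h0, h1⟩
    · simp [h0, h1] at hd
  · simp [h0] at hd

/-- Coefficient of `q^k` in the inverse of `(q;q)_a`. -/
noncomputable def V (a k : ℕ) : ℤ := Ring.inverse (poch 1 1 a) (e3 0 0 k)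

lemma poch_succ (a : ℕ) : poch 1 1 (a + 1) = poch 1 1 a * (1 - (X 2 : MvPowerSeries (Fin 3) ℤ) ^ (a + 1)) := by
  unfold poch
  rw [Finset.prod_range_succ, show 1 + 1 * a = a + 1 from by omega]

lemma inverse_poch_rec (a : ℕ) :
    Ring.inverse (poch 1 1 (a + 1)) * (1 - (X 2 : MvPowerSeries (Fin 3) ℤ) ^ (a + 1))
      = Ring.inverse (poch 1 1 a) := by
  have h1 := isUnit_poch 1 1 a le_rfl
  have h2 := isUnit_poch 1 1 (a + 1) le_rfl
  apply h1.mul_left_cancel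
  rw [Ring.mul_inverse_cancel _ h1]
  calc poch 1 1 a * (Ring.inverse (poch 1 1 (a+1)) * (1 - (X 2 : MvPowerSeries (Fin 3) ℤ) ^ (a+1)))
      = (poch 1 1 a * (1 - (X 2 : MvPowerSeries (Fin 3) ℤ) ^ (a+1))) * Ring.inverse (poch 1 1 (a+1)) := by ring
    _ = poch 1 1 (a+1) * Ring.inverse (poch 1 1 (a+1)) := by rw [← poch_succ]
    _ = 1 := Ring.mul_inverse_cancel _ h2

lemma Vrec (a k : ℕ) :
    V (a + 1) k = V a k + (if a + 1 ≤ k then V (a + 1) (k - (a + 1)) else 0) := by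
  have h := inverse_poch_rec a
  have : Ring.inverse (poch 1 1 a)
      = Ring.inverse (poch 1 1 (a+1)) - (X 2 : MvPowerSeries (Fin 3) ℤ) ^ (a+1) * Ring.inverse (poch 1 1 (a+1)) := by
    rw [← h]; ring
  have hc := congrArg (coeff (R := ℤ) (e3 0 0 k)) this
  rw [map_sub, coeff_Xpow_mul] at hc
  rw [e3_apply2] at hc
  rw [sub_single2] at hc
  simp only [e3_apply0, e3_apply1, e3_apply2] at hc
  unfold V
  have hca : (coeff (e3 0 0 k)) (Ring.inverse (poch 1 1 a)) = Ring.inverse (poch 1 1 a) (e3 0 0 k) := rfl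
  have hcb : (coeff (e3 0 0 k)) (Ring.inverse (poch 1 1 (a+1))) = Ring.inverse (poch 1 1 (a+1)) (e3 0 0 k) := rfl
  rw [hca, hcb] at hc
  by_cases hk : a + 1 ≤ k
  · rw [if_pos hk] at hc ⊢
    have hcc : (coeff (e3 0 0 (k - (a + 1)))) (Ring.inverse (poch 1 1 (a+1)))
        = Ring.inverse (poch 1 1 (a+1)) (e3 0 0 (k - (a+1))) := rfl
    rw [hcc] at hc
    linarith
  · rw [if_neg hk] at hc ⊢
    linarith

/-- Coefficient of `x^a q^j` in the Rogers–Ramanujan series. -/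
noncomputable def sc (a j : ℕ) : ℤ := if a ^ 2 ≤ j then V a (j - a ^ 2) else 0

/-- Coefficient of `y^b q^j` in the second series. -/
noncomputable def tc (b j : ℕ) : ℤ :=
  if 2 * b ^ 2 ≤ j then Ring.inverse (poch 2 2 b) (e3 0 0 (j - 2 * b ^ 2)) else 0

lemma coeff_one_e3 (a b c : ℕ) :
    (1 : MvPowerSeries (Fin 3) ℤ) (e3 a b c) = if a = 0 ∧ b = 0 ∧ c = 0 then 1 else 0 := by
  classical
  have : (1 : MvPowerSeries (Fin 3) ℤ) (e3 a b c) = coeff (e3 a b c) 1 := rfl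
  rw [this, MvPowerSeries.coeff_one]
  simp [e3_eq_zero_iff]

lemma sc_zero (j : ℕ) : sc 0 j = if j = 0 then 1 else 0 := by
  unfold sc V
  have h0 : poch 1 1 0 = 1 := by unfold poch; simp
  rw [h0, Ring.inverse_one]
  simp [coeff_one_e3]

lemma tc_zero (j : ℕ) : tc 0 j = if j = 0 then 1 else 0 := by
  unfold tc
  have h0 : poch 2 2 0 = 1 := by unfold poch; simp
  rw [h0, Ring.inverse_one]
  simp [coeff_one_e3]

lemma sc_at0 (a : ℕ) : sc a 0 = if a = 0 then 1 else 0 := by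
  rcases Nat.eq_zero_or_pos a with rfl | ha
  · rw [sc_zero]
  · unfold sc
    rw [if_neg (show ¬ a ^ 2 ≤ 0 by nlinarith), if_neg (show ¬ a = 0 by omega)]


lemma tc_at0 (b : ℕ) : tc b 0 = if b = 0 then 1 else 0 := by
  rcases Nat.eq_zero_or_pos b with rfl | hb
  · rw [tc_zero]
  · unfold tc
    rw [if_neg (show ¬ 2 * b ^ 2 ≤ 0 by nlinarith), if_neg (show ¬ b = 0 by omega)]


lemma sc_rec (a j : ℕ) :
    sc a j = (if a ≤ j then sc a (j - a) else 0)
      + (if 1 ≤ a ∧ 2 * a - 1 ≤ j then sc (a - 1) (j - (2 * a - 1)) else 0) := by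
  rcases Nat.eq_zero_or_pos a with rfl | ha
  · simp [sc]
  · obtain ⟨a, rfl⟩ : ∃ a', a = a' + 1 := ⟨a - 1, by omega⟩
    have hsq : (a + 1) ^ 2 = a ^ 2 + (2 * a + 1) := by ring
    rw [show 2 * (a + 1) - 1 = 2 * a + 1 from by omega]
    unfold sc
    simp only [Nat.add_sub_cancel]
    by_cases h1 : (a + 1) ^ 2 ≤ j
    · rw [if_pos h1, Vrec]
      rw [if_pos (show a + 1 ≤ j by linarith [hsq, Nat.zero_le (a ^ 2)])]
      rw [if_pos (show 1 ≤ a + 1 ∧ 2 * a + 1 ≤ j from ⟨by omega, by linarith [hsq, Nat.zero_le (a ^ 2)]⟩)]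
      rw [if_pos (show a ^ 2 ≤ j - (2 * a + 1) from Nat.le_sub_of_add_le (by linarith [hsq, Nat.zero_le (a ^ 2)]))]
      rw [show j - (2 * a + 1) - a ^ 2 = j - (a + 1) ^ 2 from by
        rw [Nat.sub_sub, hsq, add_comm (a ^ 2)]]
      by_cases h2 : (a + 1) ^ 2 + (a + 1) ≤ j
      · rw [if_pos (show a + 1 ≤ j - (a + 1) ^ 2 from Nat.le_sub_of_add_le (by linarith [hsq, Nat.zero_le (a ^ 2)]))]
        rw [if_pos (show (a + 1) ^ 2 ≤ j - (a + 1) from Nat.le_sub_of_add_le (by linarith [hsq, Nat.zero_le (a ^ 2)]))]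
        rw [show j - (a + 1) ^ 2 - (a + 1) = j - (a + 1) - (a + 1) ^ 2 from by
          rw [Nat.sub_sub, Nat.sub_sub, add_comm]]
        exact add_comm _ _
      · rw [if_neg (show ¬ a + 1 ≤ j - (a + 1) ^ 2 from fun hcon =>
          h2 (by have := Nat.add_le_of_le_sub h1 hcon; linarith [hsq, Nat.zero_le (a ^ 2)]))]
        rw [if_neg (show ¬ (a + 1) ^ 2 ≤ j - (a + 1) from fun hcon =>
          h2 (by have := Nat.add_le_of_le_sub (show a + 1 ≤ j by linarith [hsq, Nat.zero_le (a ^ 2)]) hcon; linarith [hsq, Nat.zero_le (a ^ 2)]))]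
        exact add_comm _ _
    · rw [if_neg h1]
      have t1 : (if a + 1 ≤ j then
          (if (a + 1) ^ 2 ≤ j - (a + 1) then V (a + 1) (j - (a + 1) - (a + 1) ^ 2) else 0)
          else 0) = 0 := by
        split_ifs with h2 h3
        · exact absurd (by have := Nat.add_le_of_le_sub h2 h3; linarith [hsq, Nat.zero_le (a ^ 2)] : (a + 1) ^ 2 ≤ j) h1
        · rfl
        · rfl
      have t2 : (if 1 ≤ a + 1 ∧ 2 * a + 1 ≤ j then
          (if a ^ 2 ≤ j - (2 * a + 1) then V a (j - (2 * a + 1) - a ^ 2) else 0)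
          else 0) = 0 := by
        split_ifs with h2 h3
        · exact absurd (by have := Nat.add_le_of_le_sub h2.2 h3; linarith [hsq, Nat.zero_le (a ^ 2)] : (a + 1) ^ 2 ≤ j) h1
        · rfl
        · rfl
      rw [t1, t2]
      simp

lemma coeff_termX0 (e l : ℕ) {h : MvPowerSeries (Fin 3) ℤ} (H : Qsupp h) (d : Fin 3 →₀ ℕ) :
    (((X 2 : MvPowerSeries (Fin 3) ℤ) ^ e * (X 0) ^ l * h : MvPowerSeries (Fin 3) ℤ)) d
      = if d 0 = l ∧ d 1 = 0 ∧ e ≤ d 2 then h (e3 0 0 (d 2 - e)) else 0 := by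
  have h0 : (((X 2 : MvPowerSeries (Fin 3) ℤ) ^ e * (X 0) ^ l * h : MvPowerSeries (Fin 3) ℤ)) d
      = coeff d ((X 2 : MvPowerSeries (Fin 3) ℤ) ^ e * ((X 0) ^ l * h)) := by
    rw [mul_assoc]; rfl
  rw [h0, coeff_Xpow_mul, sub_single2]
  by_cases he : e ≤ d 2
  · rw [if_pos he, coeff_Xpow_mul, sub_single0]
    rw [e3_apply0, e3_apply1, e3_apply2]
    by_cases hl : l ≤ d 0
    · rw [if_pos hl]
      by_cases h1 : d 0 = l
      · by_cases h2 : d 1 = 0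
        · rw [if_pos ⟨h1, h2, he⟩]
          rw [show d 0 - l = 0 from by omega, h2]
          rfl
        · rw [if_neg (by tauto)]
          have := H (e3 (d 0 - l) (d 1) (d 2 - e))
          by_contra hne
          have h3 := this hne
          simp only [e3_apply0, e3_apply1] at h3
          exact h2 h3.2
      · rw [if_neg (by tauto)]
        have := H (e3 (d 0 - l) (d 1) (d 2 - e))
        by_contra hne
        have h3 := this hne
        simp only [e3_apply0, e3_apply1] at h3
        omega
    · rw [if_neg hl, if_neg (by omega)]
  · rw [if_neg he, if_neg (by tauto)]

lemma coeff_termX1 (e l : ℕ) {h : MvPowerSeries (Fin 3) ℤ} (H : Qsupp h) (d : Fin 3 →₀ ℕ) :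
    (((X 2 : MvPowerSeries (Fin 3) ℤ) ^ e * (X 1) ^ l * h : MvPowerSeries (Fin 3) ℤ)) d
      = if d 0 = 0 ∧ d 1 = l ∧ e ≤ d 2 then h (e3 0 0 (d 2 - e)) else 0 := by
  have h0 : (((X 2 : MvPowerSeries (Fin 3) ℤ) ^ e * (X 1) ^ l * h : MvPowerSeries (Fin 3) ℤ)) d
      = coeff d ((X 2 : MvPowerSeries (Fin 3) ℤ) ^ e * ((X 1) ^ l * h)) := by
    rw [mul_assoc]; rfl
  rw [h0, coeff_Xpow_mul, sub_single2]
  by_cases he : e ≤ d 2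
  · rw [if_pos he, coeff_Xpow_mul, sub_single1]
    rw [e3_apply0, e3_apply1, e3_apply2]
    by_cases hl : l ≤ d 1
    · rw [if_pos hl]
      by_cases h1 : d 1 = l
      · by_cases h2 : d 0 = 0
        · rw [if_pos ⟨h2, h1, he⟩]
          rw [show d 1 - l = 0 from by omega, h2]
          rfl
        · rw [if_neg (by tauto)]
          have := H (e3 (d 0) (d 1 - l) (d 2 - e))
          by_contra hne
          have h3 := this hne
          simp only [e3_apply0, e3_apply1] at h3
          exact h2 h3.1
      · rw [if_neg (by tauto)]
        have := H (e3 (d 0) (d 1 - l) (d 2 - e))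
        by_contra hne
        have h3 := this hne
        simp only [e3_apply0, e3_apply1] at h3
        omega
    · rw [if_neg hl, if_neg (by omega)]
  · rw [if_neg he, if_neg (by tauto)]

lemma coeff_X0X2_mul (G : MvPowerSeries (Fin 3) ℤ) (d : Fin 3 →₀ ℕ) :
    (X 0 * X 2 * G : MvPowerSeries (Fin 3) ℤ) d
      = if 1 ≤ d 0 ∧ 1 ≤ d 2 then G (e3 (d 0 - 1) (d 1) (d 2 - 1)) else 0 := by
  have h0 : (X 0 * X 2 * G : MvPowerSeries (Fin 3) ℤ) d
      = coeff d ((X 0 : MvPowerSeries (Fin 3) ℤ) ^ 1 * ((X 2) ^ 1 * G)) := by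
    rw [pow_one, pow_one, ← mul_assoc]; rfl
  rw [h0, coeff_Xpow_mul, sub_single0]
  by_cases h1 : 1 ≤ d 0
  · rw [if_pos h1, coeff_Xpow_mul, sub_single2]
    rw [e3_apply0, e3_apply1, e3_apply2]
    by_cases h2 : 1 ≤ d 2
    · rw [if_pos h2, if_pos ⟨h1, h2⟩]
      rfl
    · rw [if_neg h2, if_neg (by tauto)]
  · rw [if_neg h1, if_neg (by tauto)]

lemma S_eval :
    (∑' l : ℕ, (X 2 : MvPowerSeries (Fin 3) ℤ) ^ (l^2) * (X 0) ^ l * Ring.inverse (poch 1 1 l) : MvPowerSeries (Fin 3) ℤ)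
      = fun d => if d 1 = 0 then sc (d 0) (d 2) else 0 := by
  rw [tsum_apply_single _ (fun d => d 0) (fun d l hl => by
    rw [coeff_termX0 _ _ (Qsupp_inverse_poch 1 1 l le_rfl)]
    rw [if_neg (by tauto)])]
  funext d
  rw [coeff_termX0 _ _ (Qsupp_inverse_poch 1 1 (d 0) le_rfl)]
  unfold sc V
  by_cases h1 : d 1 = 0
  · by_cases h2 : d 0 ^ 2 ≤ d 2
    · rw [if_pos ⟨rfl, h1, h2⟩, if_pos h1, if_pos h2]
    · rw [if_neg (by tauto), if_pos h1, if_neg h2]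
  · rw [if_neg (by tauto), if_neg h1]

lemma T_eval :
    (∑' i : ℕ, (X 2 : MvPowerSeries (Fin 3) ℤ) ^ (2*i^2) * (X 1) ^ i * Ring.inverse (poch 2 2 i) : MvPowerSeries (Fin 3) ℤ)
      = fun d => if d 0 = 0 then tc (d 1) (d 2) else 0 := by
  rw [tsum_apply_single _ (fun d => d 1) (fun d l hl => by
    rw [coeff_termX1 _ _ (Qsupp_inverse_poch 2 2 l (by omega))]
    rw [if_neg (by tauto)])]
  funext d
  rw [coeff_termX1 _ _ (Qsupp_inverse_poch 2 2 (d 1) (by omega))]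
  unfold tc
  by_cases h0 : d 0 = 0
  · by_cases h2 : 2 * d 1 ^ 2 ≤ d 2
    · rw [if_pos ⟨h0, rfl, h2⟩, if_pos h0, if_pos h2]
    · rw [if_neg (by tauto), if_pos h0, if_neg h2]
  · rw [if_neg (by tauto), if_neg h0]

/-- The solution. -/
noncomputable def Fsol : MvPowerSeries (Fin 3) ℤ :=
  fun d => ∑ j ∈ Finset.range (d 2 + 1), sc (d 0) j * tc (d 1) (d 2 - j)

lemma sum_shift (g : ℕ → ℤ) (m c : ℕ) :
    (∑ j ∈ Finset.range (c+1), if m ≤ j then g (j - m) else 0)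
      = if m ≤ c then ∑ i ∈ Finset.range (c - m + 1), g i else 0 := by
  rw [Finset.sum_ite, Finset.sum_const_zero, add_zero]
  have hf : (Finset.range (c+1)).filter (fun j => m ≤ j) = Finset.Ico m (c+1) := by
    ext j
    simp only [Finset.mem_filter, Finset.mem_Ico, Finset.mem_range]
    omega
  rw [hf, Finset.sum_Ico_eq_sum_range]
  by_cases hm : m ≤ c
  · rw [if_pos hm, show c + 1 - m = c - m + 1 from by omega]
    apply Finset.sum_congr rfl
    intro i _
    congr 1
    omega
  · rw [if_neg hm, show c + 1 - m = 0 from by omega]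
    simp

lemma Fsol_key (a b c : ℕ) :
    (∑ j ∈ Finset.range (c+1), sc a j * tc b (c - j))
      = (if a ≤ c then ∑ j ∈ Finset.range (c - a + 1), sc a j * tc b (c - a - j) else 0)
      + (if 1 ≤ a ∧ 2*a - 1 ≤ c then
          ∑ j ∈ Finset.range (c - (2*a-1) + 1), sc (a-1) j * tc b (c - (2*a-1) - j) else 0) := by
  have step : ∀ j, sc a j * tc b (c - j) =
      (if a ≤ j then sc a (j - a) * tc b (c - j) else 0)
      + (if 1 ≤ a ∧ 2*a-1 ≤ j then sc (a-1) (j - (2*a-1)) * tc b (c - j) else 0) := by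
    intro j
    rw [sc_rec a j, add_mul]
    congr 1
    · split <;> simp
    · split <;> simp
  rw [Finset.sum_congr rfl (fun j _ => step j), Finset.sum_add_distrib]
  congr 1
  · have h2 : ∀ j, (if a ≤ j then sc a (j - a) * tc b (c - j) else 0)
        = (if a ≤ j then (fun i => sc a i * tc b (c - a - i)) (j - a) else 0) := by
      intro j
      split
      · simp only
        rw [show c - a - (j - a) = c - j from by omega]
      · rfl
    rw [Finset.sum_congr rfl (fun j _ => h2 j)]
    exact sum_shift (fun i => sc a i * tc b (c - a - i)) a c
  · by_cases ha : 1 ≤ a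
    · have h2 : ∀ j, (if 1 ≤ a ∧ 2*a-1 ≤ j then sc (a-1) (j-(2*a-1)) * tc b (c - j) else 0)
          = (if 2*a-1 ≤ j then (fun i => sc (a-1) i * tc b (c - (2*a-1) - i)) (j - (2*a-1)) else 0) := by
        intro j
        by_cases h : 2*a-1 ≤ j
        · rw [if_pos ⟨ha, h⟩, if_pos h]
          simp only
          rw [show c - (2*a-1) - (j - (2*a-1)) = c - j from by omega]
        · rw [if_neg (by tauto), if_neg h]
      rw [Finset.sum_congr rfl (fun j _ => h2 j),
        sum_shift (fun i => sc (a-1) i * tc b (c - (2*a-1) - i)) (2*a-1) c]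
      by_cases hc : 2*a-1 ≤ c
      · rw [if_pos hc, if_pos ⟨ha, hc⟩]
      · rw [if_neg hc, if_neg (by tauto)]
    · rw [if_neg (by tauto)]
      apply Finset.sum_eq_zero
      intro j _
      rw [if_neg (by tauto)]

lemma Fsol_e3 (x y z : ℕ) :
    Fsol (e3 x y z) = ∑ j ∈ Finset.range (z + 1), sc x j * tc y (z - j) := rfl

lemma Fsol_funeq : Fsol = substXq 1 Fsol + X 0 * X 2 * substXq 2 Fsol := by
  funext d
  rw [show ((substXq 1 Fsol + X 0 * X 2 * substXq 2 Fsol : MvPowerSeries (Fin 3) ℤ)) d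
      = substXq 1 Fsol d + ((X 0 * X 2 * substXq 2 Fsol : MvPowerSeries (Fin 3) ℤ)) d from rfl]
  rw [coeff_X0X2_mul]
  rw [show substXq 1 Fsol d
      = (if 1 * d 0 ≤ d 2 then Fsol (e3 (d 0) (d 1) (d 2 - 1 * d 0)) else 0) from rfl]
  rw [show substXq 2 Fsol (e3 (d 0 - 1) (d 1) (d 2 - 1))
      = (if 2 * (d 0 - 1) ≤ d 2 - 1 then
          Fsol (e3 (d 0 - 1) (d 1) (d 2 - 1 - 2 * (d 0 - 1))) else 0) from rfl]
  rw [show Fsol d = ∑ j ∈ Finset.range (d 2 + 1), sc (d 0) j * tc (d 1) (d 2 - j) from rfl]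
  rw [Fsol_key (d 0) (d 1) (d 2), one_mul]
  congr 1
  by_cases ha : 1 ≤ d 0
  · by_cases hc : 2 * d 0 - 1 ≤ d 2
    · rw [if_pos (show 1 ≤ d 0 ∧ 2 * d 0 - 1 ≤ d 2 from ⟨ha, hc⟩),
        if_pos (show 1 ≤ d 0 ∧ 1 ≤ d 2 from ⟨ha, by omega⟩),
        if_pos (show 2 * (d 0 - 1) ≤ d 2 - 1 from by omega), Fsol_e3,
        show d 2 - 1 - 2 * (d 0 - 1) = d 2 - (2 * d 0 - 1) from by omega]
    · rw [if_neg (show ¬(1 ≤ d 0 ∧ 2 * d 0 - 1 ≤ d 2) from by tauto)]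
      by_cases hc1 : 1 ≤ d 2
      · rw [if_pos (show 1 ≤ d 0 ∧ 1 ≤ d 2 from ⟨ha, hc1⟩),
          if_neg (show ¬ 2 * (d 0 - 1) ≤ d 2 - 1 from by omega)]
      · rw [if_neg (show ¬(1 ≤ d 0 ∧ 1 ≤ d 2) from by tauto)]
  · rw [if_neg (show ¬(1 ≤ d 0 ∧ 2 * d 0 - 1 ≤ d 2) from by tauto),
      if_neg (show ¬(1 ≤ d 0 ∧ 1 ≤ d 2) from by tauto)]

lemma Fsol_q0 : atZero 2 Fsol = 1 := by
  classical
  funext d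
  unfold atZero
  have h1 : (1 : MvPowerSeries (Fin 3) ℤ) d = if d = 0 then 1 else 0 := by
    rw [show (1 : MvPowerSeries (Fin 3) ℤ) d = coeff d 1 from rfl, MvPowerSeries.coeff_one]
  by_cases h2 : d 2 = 0
  · rw [if_pos h2]
    have hF : Fsol d = sc (d 0) 0 * tc (d 1) 0 := by
      show (∑ j ∈ Finset.range (d 2 + 1), sc (d 0) j * tc (d 1) (d 2 - j)) = _
      rw [h2]
      simp
    rw [hF, sc_at0, tc_at0, h1]
    have hd0 : (d = 0) ↔ (d 0 = 0 ∧ d 1 = 0) := by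
      constructor
      · rintro rfl; exact ⟨rfl, rfl⟩
      · rintro ⟨ha, hb⟩
        rw [← e3_eta d, ha, hb, h2]
        exact (e3_eq_zero_iff 0 0 0).mpr ⟨rfl, rfl, rfl⟩
    by_cases ha : d 0 = 0 <;> by_cases hb : d 1 = 0 <;>
      simp [ha, hb, hd0]
  · rw [if_neg h2, h1, if_neg (fun hd => h2 (by rw [hd]; rfl))]

lemma Fsol_y0 : atZero 1 Fsol
    = (∑' l : ℕ, (X 2 : MvPowerSeries (Fin 3) ℤ) ^ (l^2) * (X 0) ^ l *
        Ring.inverse (poch 1 1 l)) := by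
  rw [S_eval]
  funext d
  unfold atZero
  by_cases h1 : d 1 = 0
  · rw [if_pos h1, if_pos h1]
    show (∑ j ∈ Finset.range (d 2 + 1), sc (d 0) j * tc (d 1) (d 2 - j)) = sc (d 0) (d 2)
    rw [h1, Finset.sum_eq_single (d 2)]
    · rw [tc_zero, if_pos (by omega : d 2 - d 2 = 0), mul_one]
    · intro j hj hne
      rw [Finset.mem_range] at hj
      rw [tc_zero, if_neg (by omega), mul_zero]
    · intro h
      exact absurd (Finset.self_mem_range_succ (d 2)) h
  · rw [if_neg h1, if_neg h1]

lemma Fsol_x0 : atZero 0 Fsol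
    = (∑' i : ℕ, (X 2 : MvPowerSeries (Fin 3) ℤ) ^ (2*i^2) * (X 1) ^ i *
        Ring.inverse (poch 2 2 i)) := by
  rw [T_eval]
  funext d
  unfold atZero
  by_cases h0 : d 0 = 0
  · rw [if_pos h0, if_pos h0]
    show (∑ j ∈ Finset.range (d 2 + 1), sc (d 0) j * tc (d 1) (d 2 - j)) = tc (d 1) (d 2)
    rw [h0, Finset.sum_eq_single 0]
    · rw [sc_zero]
      simp
    · intro j hj hne
      rw [sc_zero, if_neg hne, zero_mul]
    · intro h
      simp at h
  · rw [if_neg h0, if_neg h0]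

lemma solution_unique {F G : MvPowerSeries (Fin 3) ℤ}
    (hF : F = substXq 1 F + X 0 * X 2 * substXq 2 F)
    (hG : G = substXq 1 G + X 0 * X 2 * substXq 2 G)
    (h2 : atZero 2 F = atZero 2 G)
    (h0 : atZero 0 F = atZero 0 G) : F = G := by
  have hbase : ∀ d : Fin 3 →₀ ℕ, d 2 = 0 → F d = G d := by
    intro d hq
    have := congrFun h2 d
    unfold atZero at this
    rw [if_pos hq, if_pos hq] at this
    exact this
  have hx0 : ∀ d : Fin 3 →₀ ℕ, d 0 = 0 → F d = G d := by
    intro d hx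
    have := congrFun h0 d
    unfold atZero at this
    rw [if_pos hx, if_pos hx] at this
    exact this
  have key : ∀ c : ℕ, ∀ d : Fin 3 →₀ ℕ, d 2 ≤ c → F d = G d := by
    intro c
    induction c with
    | zero =>
      intro d hd
      exact hbase d (by omega)
    | succ c ih =>
      intro d hd
      by_cases hq : d 2 = 0
      · exact hbase d hq
      by_cases hx : d 0 = 0
      · exact hx0 d hx
      have hF' := congrFun hF d
      have hG' := congrFun hG d
      rw [show ((substXq 1 F + X 0 * X 2 * substXq 2 F : MvPowerSeries (Fin 3) ℤ)) d
          = substXq 1 F d + ((X 0 * X 2 * substXq 2 F : MvPowerSeries (Fin 3) ℤ)) d from rfl,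
        coeff_X0X2_mul] at hF'
      rw [show ((substXq 1 G + X 0 * X 2 * substXq 2 G : MvPowerSeries (Fin 3) ℤ)) d
          = substXq 1 G d + ((X 0 * X 2 * substXq 2 G : MvPowerSeries (Fin 3) ℤ)) d from rfl,
        coeff_X0X2_mul] at hG'
      rw [hF', hG']
      congr 1
      · show (if 1 * d 0 ≤ d 2 then F (e3 (d 0) (d 1) (d 2 - 1 * d 0)) else 0)
            = (if 1 * d 0 ≤ d 2 then G (e3 (d 0) (d 1) (d 2 - 1 * d 0)) else 0)
        split_ifs with h
        · exact ih _ (by simp only [e3_apply2]; omega)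
        · rfl
      · split_ifs with h
        · show (if 2 * (d 0 - 1) ≤ d 2 - 1 then
              F (e3 (d 0 - 1) (d 1) (d 2 - 1 - 2 * (d 0 - 1))) else 0)
            = (if 2 * (d 0 - 1) ≤ d 2 - 1 then
              G (e3 (d 0 - 1) (d 1) (d 2 - 1 - 2 * (d 0 - 1))) else 0)
          split_ifs with h'
          · exact ih _ (by simp only [e3_apply2]; omega)
          · rfl
        · rfl
  funext d
  exact key (d 2) d le_rfl

/-- The functional equation `F(x,y,q) = F(xq,y,q) + xq·F(xq²,y,q)` together with the
initial conditions `F(x,y,0) = 1`, `F(x,0,q) = ∑_ℓ q^{ℓ²} x^ℓ/(q;q)_ℓ`,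
`F(0,y,q) = ∑_i q^{2i²} y^i/(q²;q²)_i` has a unique solution in `ℤ[[x,y,q]]`. -/
theorem unique_solution_functional_equation :
    ∃! F : MvPowerSeries (Fin 3) ℤ,
      F = substXq 1 F + X 0 * X 2 * substXq 2 F ∧
      atZero 2 F = 1 ∧
      atZero 1 F = (∑' l : ℕ, (X 2 : MvPowerSeries (Fin 3) ℤ) ^ (l^2) * (X 0) ^ l *
        Ring.inverse (poch 1 1 l)) ∧
      atZero 0 F = (∑' i : ℕ, (X 2 : MvPowerSeries (Fin 3) ℤ) ^ (2*i^2) * (X 1) ^ i *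
        Ring.inverse (poch 2 2 i)) := by
  refine ⟨Fsol, ⟨Fsol_funeq, Fsol_q0, Fsol_y0, Fsol_x0⟩, ?_⟩
  rintro G ⟨hG1, hG2, hG3, hG4⟩
  exact solution_unique hG1 Fsol_funeq (by rw [hG2, Fsol_q0]) (by rw [hG4, Fsol_x0])
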